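/- If two honest validators' ordered anchor sequences are each prefixes of a common infinite sequence of anchors, and each validator's final vertex ordering is obtained by concatenating deterministically-ordered new portions of causal histories of successive anchors, then for any vertex ordered by both validators, the set of vertices preceding it is identical in both orderings (no reordering anomalies). -/

import Mathlib

/-
Each step of `orderAcc` only appends to the ordering built so far, so the ordering of fewer
anchors is a prefix of the ordering of more anchors. A vertex occurring in the shorter
ordering therefore occurs at the same position in the longer one, with the same vertices
before it.
-/

/-- The vertex ordering and set of ordered vertices after processing the first `k`
anchors: for each successive anchor, append the deterministic sequencing `ord` of
the new portion of its causal history. -/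
def orderAcc {X : Type} [DecidableEq X]
    (hist : ℕ → Finset X) (ord : Finset X → List X) : ℕ → List X × Finset X
  | 0 => ([], ∅)
  | k + 1 =>
      let a := orderAcc hist ord k
      (a.1 ++ ord (hist k \ a.2), a.2 ∪ hist k)

theorem List.takeWhile_append_of_exists_not {α : Type*} {p : α → Bool} {l t : List α}
    (h : ∃ x ∈ l, ¬p x) : (l ++ t).takeWhile p = l.takeWhile p := by
  rw [List.takeWhile_append, if_neg]
  intro hlen
  have hall := List.takeWhile_eq_self_iff.mp ((List.takeWhile_prefix p).eq_of_length hlen)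
  obtain ⟨x, hx, hpx⟩ := h
  exact hpx (hall x hx)

theorem List.IsPrefix.takeWhile_eq_of_exists_not {α : Type*} {p : α → Bool} {l₁ l₂ : List α}
    (hpre : l₁ <+: l₂) (h : ∃ x ∈ l₁, ¬p x) : l₁.takeWhile p = l₂.takeWhile p := by
  obtain ⟨t, rfl⟩ := hpre
  exact (List.takeWhile_append_of_exists_not h).symm

theorem orderAcc_fst_prefix {X : Type} [DecidableEq X]
    (hist : ℕ → Finset X) (ord : Finset X → List X) {k₁ k₂ : ℕ} (hk : k₁ ≤ k₂) :
    (orderAcc hist ord k₁).1 <+: (orderAcc hist ord k₂).1 := by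
  induction k₂, hk using Nat.le_induction with
  | base => exact List.prefix_rfl
  | succ k _ ih => exact ih.trans (List.prefix_append _ _)

theorem no_reordering_anomalies_general {X : Type} [DecidableEq X]
    (hist : ℕ → Finset X) (ord : Finset X → List X)
    (k₁ k₂ : ℕ) (hk : k₁ ≤ k₂) :
    (orderAcc hist ord k₁).1 <+: (orderAcc hist ord k₂).1 ∧
      ∀ v ∈ (orderAcc hist ord k₁).1,
        (orderAcc hist ord k₁).1.takeWhile (fun u => u ≠ v) =
          (orderAcc hist ord k₂).1.takeWhile (fun u => u ≠ v) := by
  have hpre := orderAcc_fst_prefix hist ord hk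
  exact ⟨hpre, fun v hv => hpre.takeWhile_eq_of_exists_not ⟨v, hv, by simp⟩⟩

/-- No reordering anomalies: if two validators order, respectively, the first `k₁`
and the first `k₂` anchors of a common anchor sequence with monotone causal
histories, using the same deterministic sequencing rule, then their vertex
orderings are prefix-compatible; hence any vertex ordered by both is preceded by
exactly the same vertices in both orderings. -/
theorem no_reordering_anomalies {X : Type} [DecidableEq X]
    (hist : ℕ → Finset X) (ord : Finset X → List X)
    (hmono : Monotone hist)
    (k₁ k₂ : ℕ) (hk : k₁ ≤ k₂) :
    (orderAcc hist ord k₁).1 <+: (orderAcc hist ord k₂).1 ∧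
      ∀ v ∈ (orderAcc hist ord k₁).1,
        (orderAcc hist ord k₁).1.takeWhile (fun u => u ≠ v) =
          (orderAcc hist ord k₂).1.takeWhile (fun u => u ≠ v) :=
  no_reordering_anomalies_general hist ord k₁ k₂ hk
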